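/- Let V(x₁,x₂) = ½(x₁²+x₂²) + x₁²x₂ − ⅓x₂³ be the Hénon–Heiles potential and H(x,y) = ½(y₁²+y₂²) + V(x₁,x₂). At every point (x₁,x₂,y₁,y₂) with H(x₁,x₂,y₁,y₂) = 1/6 and 0 ≤ x₂ < 1, the derivative of H along the radial vector field Z = ½(x₁,x₂,y₁,y₂) satisfies dH·Z = 1/6 + ½x₁²x₂ − (1/6)x₂³ > 0. -/

import Mathlib

/-!
Euler's relation: `Z = ½(x, y)` multiplies a homogeneous polynomial of degree `d` by `d / 2`.
The quadratic part of `H` is therefore reproduced and its cubic part `x₁²x₂ − x₂³/3` is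
scaled by `3/2`, so `dH·Z = H + ½(x₁²x₂ − x₂³/3)`, which is `1/6 + ½x₁²x₂ − x₂³/6` on the
level `H = 1/6`. For `0 ≤ x₂ < 1` the middle term is nonnegative and `x₂³ < 1`.
-/

/-- The Hénon–Heiles potential. -/
noncomputable def hhV (x₁ x₂ : ℝ) : ℝ := (x₁ ^ 2 + x₂ ^ 2) / 2 + x₁ ^ 2 * x₂ - x₂ ^ 3 / 3

/-- The Hénon–Heiles Hamiltonian `H = |y|²/2 + V(x)`. -/
noncomputable def hhH (x₁ x₂ y₁ y₂ : ℝ) : ℝ := (y₁ ^ 2 + y₂ ^ 2) / 2 + hhV x₁ x₂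

section PartialDerivatives

variable (x₁ x₂ y₁ y₂ : ℝ)

theorem hasDerivAt_hhH_x₁ : HasDerivAt (fun t => hhH t x₂ y₁ y₂) (x₁ + 2 * x₁ * x₂) x₁ := by
  have h := hasDerivAt_pow 2 x₁
  refine (((((h.add_const (x₂ ^ 2)).div_const 2).add (h.mul_const x₂)).sub_const
    (x₂ ^ 3 / 3)).const_add ((y₁ ^ 2 + y₂ ^ 2) / 2)).congr_deriv ?_
  norm_num

theorem hasDerivAt_hhH_x₂ : HasDerivAt (fun t => hhH x₁ t y₁ y₂) (x₂ + x₁ ^ 2 - x₂ ^ 2) x₂ := by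
  refine ((((((hasDerivAt_pow 2 x₂).const_add (x₁ ^ 2)).div_const 2).add
    ((hasDerivAt_id x₂).const_mul (x₁ ^ 2))).sub ((hasDerivAt_pow 3 x₂).div_const 3)).const_add
    ((y₁ ^ 2 + y₂ ^ 2) / 2)).congr_deriv ?_
  norm_num

theorem hasDerivAt_hhH_y₁ : HasDerivAt (fun t => hhH x₁ x₂ t y₂) y₁ y₁ := by
  refine ((((hasDerivAt_pow 2 y₁).add_const (y₂ ^ 2)).div_const 2).add_const
    (hhV x₁ x₂)).congr_deriv ?_
  norm_num

theorem hasDerivAt_hhH_y₂ : HasDerivAt (fun t => hhH x₁ x₂ y₁ t) y₂ y₂ := by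
  refine ((((hasDerivAt_pow 2 y₂).const_add (y₁ ^ 2)).div_const 2).add_const
    (hhV x₁ x₂)).congr_deriv ?_
  norm_num

theorem hhH_radial_deriv_eq :
    1 / 2 * (x₁ * deriv (fun t => hhH t x₂ y₁ y₂) x₁
        + x₂ * deriv (fun t => hhH x₁ t y₁ y₂) x₂
        + y₁ * deriv (fun t => hhH x₁ x₂ t y₂) y₁
        + y₂ * deriv (fun t => hhH x₁ x₂ y₁ t) y₂)
      = hhH x₁ x₂ y₁ y₂ + (x₁ ^ 2 * x₂ - x₂ ^ 3 / 3) / 2 := by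
  rw [(hasDerivAt_hhH_x₁ x₁ x₂ y₁ y₂).deriv, (hasDerivAt_hhH_x₂ x₁ x₂ y₁ y₂).deriv,
    (hasDerivAt_hhH_y₁ x₁ x₂ y₁ y₂).deriv, (hasDerivAt_hhH_y₂ x₁ x₂ y₁ y₂).deriv]
  unfold hhH hhV
  ring

end PartialDerivatives

/-- At every point of the Hénon–Heiles energy level `H = 1/6` with
`0 ≤ x₂ < 1`, the derivative of `H` along the radial vector field
`Z = ½(x₁,x₂,y₁,y₂)` equals `1/6 + ½x₁²x₂ − x₂³/6` and is positive. -/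
theorem henonHeiles_radial_transversality
    (x₁ x₂ y₁ y₂ : ℝ) (hE : hhH x₁ x₂ y₁ y₂ = 1 / 6) (h0 : 0 ≤ x₂) (h1 : x₂ < 1) :
    1 / 2 * (x₁ * deriv (fun t => hhH t x₂ y₁ y₂) x₁
        + x₂ * deriv (fun t => hhH x₁ t y₁ y₂) x₂
        + y₁ * deriv (fun t => hhH x₁ x₂ t y₂) y₁
        + y₂ * deriv (fun t => hhH x₁ x₂ y₁ t) y₂)
      = 1 / 6 + 1 / 2 * x₁ ^ 2 * x₂ - 1 / 6 * x₂ ^ 3 ∧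
    0 < 1 / 6 + 1 / 2 * x₁ ^ 2 * x₂ - 1 / 6 * x₂ ^ 3 := by
  refine ⟨by rw [hhH_radial_deriv_eq, hE]; ring, ?_⟩
  have hcube : x₂ ^ 3 < 1 := pow_lt_one₀ h0 h1 three_ne_zero
  have hmixed : 0 ≤ x₁ ^ 2 * x₂ := mul_nonneg (sq_nonneg x₁) h0
  linarith
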